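/- Let (A,m) be a Noetherian local ring, let I be an ideal, and let x₁,…,x_s ∈ I be a superficial sequence for I. Then for all sufficiently large n, Iⁿ ∩ (x₁,…,x_s) = (x₁,…,x_s)I^{n−1}. -/

import Mathlib

open IsLocalRing Polynomial

/-- The length of a module, as a natural number (junk value `0` if infinite). -/
noncomputable def flen (R M : Type*) [CommRing R] [AddCommGroup M] [Module R M] : ℕ :=
  ((Order.krullDim (Submodule R M)).unbotD 0).toNat

/-- `qlen N P` is the length `λ(N/(P ∩ N))` for ideals `N P` of `R`. -/
noncomputable def qlen {R : Type*} [CommRing R] (N P : Ideal R) : ℕ :=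
  flen R (↥N ⧸ (Submodule.comap N.subtype P))

/-- `J` is a reduction of `I` if `J ≤ I` and `J * Iⁿ = I^(n+1)` for some `n ≥ 0`. -/
def IsReduction {R : Type*} [CommRing R] (J I : Ideal R) : Prop :=
  J ≤ I ∧ ∃ n : ℕ, J * I ^ n = I ^ (n + 1)

/-- `J` is a minimal reduction of `I` if it is a reduction containing no strictly
smaller reduction of `I`. -/
def IsMinimalReduction {R : Type*} [CommRing R] (J I : Ideal R) : Prop :=
  IsReduction J I ∧ ∀ K : Ideal R, K ≤ J → IsReduction K I → K = J

/-- The reduction number `r_J(I)`. -/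
noncomputable def redNum {R : Type*} [CommRing R] (J I : Ideal R) : ℕ :=
  sInf {n : ℕ | J * I ^ n = I ^ (n + 1)}

/-- The reduction number `r(I)`: minimum of `r_J(I)` over minimal reductions `J`. -/
noncomputable def redNumMin {R : Type*} [CommRing R] (I : Ideal R) : ℕ :=
  sInf {r : ℕ | ∃ J : Ideal R, IsMinimalReduction J I ∧ redNum J I = r}

/-- The depth of the ideal `J` on the ring `S`: the supremum of lengths of
`S`-regular sequences contained in `J`. -/
noncomputable def ringDepth {S : Type*} [CommRing S] (J : Ideal S) : ℕ∞ :=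
  sSup {n : ℕ∞ | ∃ rs : List S, (∀ x ∈ rs, x ∈ J) ∧
    RingTheory.Sequence.IsRegular S rs ∧ (rs.length : ℕ∞) = n}

/-- The associated graded ring `G(I) = ⊕ₙ Iⁿ/Iⁿ⁺¹`, realized as `R(I)/I·R(I)`
where `R(I)` is the Rees algebra of `I`. -/
abbrev AssocGraded {R : Type*} [CommRing R] (I : Ideal R) :=
  ↥(reesAlgebra I) ⧸ (Ideal.map (algebraMap R ↥(reesAlgebra I)) I)

/-- The ring map `R(I) → R` sending a polynomial to its constant coefficient. -/
noncomputable def reesConstCoeff {R : Type*} [CommRing R] (I : Ideal R) :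
    ↥(reesAlgebra I) →+* R :=
  (Polynomial.constantCoeff).comp (Subalgebra.val (reesAlgebra I)).toRingHom

/-- The maximal homogeneous ideal of the Rees algebra `R(I)` (over a local base ring):
elements whose constant coefficient lies in the Jacobson radical (= maximal ideal). -/
noncomputable def reesMaxHomIdeal {R : Type*} [CommRing R] (I : Ideal R) :
    Ideal ↥(reesAlgebra I) :=
  Ideal.comap (reesConstCoeff I) ((⊥ : Ideal R).jacobson)

/-- The maximal homogeneous ideal of `G(I)` (over a local base ring). -/
noncomputable def maxHomIdeal {R : Type*} [CommRing R] (I : Ideal R) :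
    Ideal (AssocGraded I) :=
  Ideal.map (Ideal.Quotient.mk _) (reesMaxHomIdeal I)

/-- The depth of `G(I)` with respect to its maximal homogeneous ideal. -/
noncomputable def gradedDepth {R : Type*} [CommRing R] (I : Ideal R) : ℕ∞ :=
  ringDepth (S := AssocGraded I) (maxHomIdeal I)

/-- `G(I)` is Cohen-Macaulay: its depth at the maximal homogeneous ideal equals
its Krull dimension. -/
def GradedCM {R : Type*} [CommRing R] (I : Ideal R) : Prop :=
  (gradedDepth I : WithBot ℕ∞) = ringKrullDim (AssocGraded I)

/-- The initial form `x* = x + I² ∈ G(I)₁` of an element `x ∈ I`, realized in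
`R(I)/I·R(I)` as the class of `x·t`. -/
noncomputable def initForm {R : Type*} [CommRing R] (I : Ideal R) (x : R) (hx : x ∈ I) :
    AssocGraded I :=
  Ideal.Quotient.mk _
    ⟨Polynomial.monomial 1 x, reesAlgebra.monomial_mem.mpr (by rwa [pow_one])⟩

/-- `a` is a superficial element for `I`. -/
def IsSuperficial {A : Type*} [CommRing A] (I : Ideal A) (a : A) : Prop :=
  ∃ c : ℕ, ∀ n > c, (I ^ n).colon (Ideal.span {a}) ⊓ I ^ c = I ^ (n - 1)

/-- `x₁, …, x_s` is a superficial sequence for `I`: each `xᵢ` is superficial for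
`I` modulo `(x₁, …, x_{i-1})`. -/
def IsSuperficialSeq {A : Type*} [CommRing A] (I : Ideal A) : List A → Prop
  | [] => True
  | x :: xs => x ∈ I ∧ IsSuperficial I x ∧
      IsSuperficialSeq (I.map (Ideal.Quotient.mk (Ideal.span {x})))
        (xs.map (Ideal.Quotient.mk (Ideal.span {x})))
  termination_by l => l.length
  decreasing_by simp


universe u

lemma sup_single_aux {A : Type*} [CommRing A] [IsNoetherianRing A] (I : Ideal A) (x : A)
    (hs : IsSuperficial I x) :
    ∃ N : ℕ, ∀ n ≥ N, I ^ n ⊓ Ideal.span {x} ≤ Ideal.span {x} * I ^ (n - 1) := by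
  obtain ⟨c, hc⟩ := hs
  obtain ⟨k, hk⟩ := Ideal.exists_pow_inf_eq_pow_smul I (Ideal.span {x})
  refine ⟨c + k + 1, fun n hn z hz => ?_⟩
  have hAR : I ^ n ⊓ Ideal.span {x} ≤ Ideal.span {x} * I ^ (n - k) := by
    have h1 := hk n (by omega)
    rw [smul_eq_mul, Ideal.mul_top] at h1
    rw [h1, Ideal.smul_eq_mul, mul_comm]
    exact Ideal.mul_mono_left inf_le_right
  obtain ⟨y, hy, hxy⟩ := Ideal.mem_span_singleton_mul.mp (hAR hz)
  have hyc : y ∈ I ^ c := Ideal.pow_le_pow_right (by omega) hy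
  have hycol : y ∈ (I ^ n).colon (Ideal.span {x}) := by
    rw [Ideal.mem_colon_span_singleton, mul_comm, hxy]
    exact hz.1
  have : y ∈ I ^ (n - 1) := by
    rw [← hc n (by omega)]; exact ⟨hycol, hyc⟩
  exact Ideal.mem_span_singleton_mul.mpr ⟨y, this, hxy⟩

lemma seq_mem_aux : ∀ (s : ℕ) {A : Type u} [CommRing A] (I : Ideal A) (xs : List A),
    xs.length = s → IsSuperficialSeq I xs → ∀ y ∈ xs, y ∈ I := by
  intro s
  induction s with
  | zero =>
    intro A _ I xs hlen _ y hy
    rw [List.length_eq_zero_iff] at hlen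
    subst hlen
    simp at hy
  | succ s ih =>
    intro A _ I xs hlen hseq y hy
    cases xs with
    | nil => simp at hlen
    | cons x tl =>
      rw [IsSuperficialSeq] at hseq
      obtain ⟨hxI, _, htl⟩ := hseq
      rcases List.mem_cons.mp hy with rfl | hy'
      · exact hxI
      · set π := Ideal.Quotient.mk (Ideal.span {x}) with hπ
        have hmem : π y ∈ Ideal.map π I :=
          ih (I.map π) (tl.map π) (by simpa using Nat.succ_injective hlen) htl (π y)
            (List.mem_map_of_mem (f := π) hy')
        have : y ∈ Ideal.comap π (Ideal.map π I) := hmem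
        rw [Ideal.comap_map_of_surjective π Ideal.Quotient.mk_surjective,
          ← RingHom.ker_eq_comap_bot, Ideal.mk_ker] at this
        have hle : Ideal.span {x} ≤ I := by
          rwa [Ideal.span_le, Set.singleton_subset_iff]
        rw [sup_eq_left.mpr hle] at this
        exact this

lemma seq_main_aux : ∀ (s : ℕ) {A : Type u} [CommRing A] [IsNoetherianRing A] (I : Ideal A)
    (xs : List A), xs.length = s → IsSuperficialSeq I xs →
    ∃ N : ℕ, ∀ n ≥ N,
      I ^ n ⊓ Ideal.span {y | y ∈ xs} = Ideal.span {y | y ∈ xs} * I ^ (n - 1) := by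
  intro s
  induction s with
  | zero =>
    intro A _ _ I xs hlen _
    rw [List.length_eq_zero_iff] at hlen
    subst hlen
    refine ⟨0, fun n _ => ?_⟩
    have h0 : {y | y ∈ ([] : List A)} = (∅ : Set A) := by simp
    simp [h0]
  | succ s ih =>
    intro A _ _ I xs hlen hseq
    cases xs with
    | nil => simp at hlen
    | cons x tl =>
      have hseq' := hseq
      rw [IsSuperficialSeq] at hseq'
      obtain ⟨hxI, hsup, htl⟩ := hseq'
      set π := Ideal.Quotient.mk (Ideal.span {x}) with hπ
      have hmemI : ∀ y ∈ x :: tl, y ∈ I := seq_mem_aux (s + 1) I (x :: tl) hlen hseq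
      obtain ⟨N1, h1⟩ := sup_single_aux I x hsup
      obtain ⟨N2, h2⟩ := ih (I.map π) (tl.map π) (by simpa using Nat.succ_injective hlen) htl
      refine ⟨max (max N1 N2) 1, fun n hn => ?_⟩
      have hn1 : n ≥ N1 := le_trans (le_max_left _ _) (le_trans (le_max_left _ _) hn)
      have hn2 : n ≥ N2 := le_trans (le_max_right _ _) (le_trans (le_max_left _ _) hn)
      have hnpos : 1 ≤ n := le_trans (le_max_right _ _) hn
      set J := Ideal.span {y | y ∈ x :: tl} with hJdef
      set T := Ideal.span {y | y ∈ tl} with hTdef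
      have hJ : J = Ideal.span {x} ⊔ T := by
        rw [hJdef, show {y | y ∈ x :: tl} = insert x {y | y ∈ tl} from by ext; simp,
          Ideal.span_insert]
      have hTI : T ≤ I := by
        rw [hTdef, Ideal.span_le]
        exact fun y hy => hmemI y (List.mem_cons_of_mem x hy)
      have hJI : J ≤ I := by
        rw [hJdef, Ideal.span_le]
        exact fun y hy => hmemI y hy
      have hpow : I * I ^ (n - 1) = I ^ n := by
        rw [← pow_succ']
        congr 1
        omega
      apply le_antisymm
      · intro z hz
        obtain ⟨hzn, hzJ⟩ := hz
        have hTmap : Ideal.span {y | y ∈ tl.map π} = Ideal.map π T := by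
          rw [hTdef, Ideal.map_span]
          congr 1
          ext y
          simp [List.mem_map]
        have hx0 : Ideal.map π (Ideal.span {x}) = ⊥ := by
          rw [Ideal.map_span]
          have : π x = 0 := Ideal.Quotient.eq_zero_iff_mem.mpr (Ideal.mem_span_singleton_self x)
          simp [this]
        have hmapz : π z ∈ Ideal.map π T := by
          have h := Ideal.mem_map_of_mem π hzJ
          rw [hJ, Ideal.map_sup, hx0, bot_sup_eq] at h
          exact h
        have hmapn : π z ∈ (Ideal.map π I) ^ n := by
          rw [← Ideal.map_pow]
          exact Ideal.mem_map_of_mem π hzn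
        have key : π z ∈ Ideal.map π (T * I ^ (n - 1)) := by
          have := h2 n hn2
          rw [hTmap] at this
          have hz2 : π z ∈ Ideal.map π T * (Ideal.map π I) ^ (n - 1) := by
            rw [← this]; exact ⟨hmapn, hmapz⟩
          rwa [← Ideal.map_pow, ← Ideal.map_mul] at hz2
        have hzcom : z ∈ T * I ^ (n - 1) ⊔ Ideal.span {x} := by
          have : z ∈ Ideal.comap π (Ideal.map π (T * I ^ (n - 1))) := key
          rwa [Ideal.comap_map_of_surjective π Ideal.Quotient.mk_surjective,
            ← RingHom.ker_eq_comap_bot, Ideal.mk_ker] at this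
        obtain ⟨w, hw, a, ha, hwa⟩ := Submodule.mem_sup.mp hzcom
        have hwI : w ∈ I ^ n := by
          rw [← hpow]
          exact Ideal.mul_mono_left hTI hw
        have haI : a ∈ I ^ n := by
          have : a = z - w := by rw [← hwa]; ring
          rw [this]
          exact Submodule.sub_mem _ hzn hwI
        have hax : a ∈ Ideal.span {x} * I ^ (n - 1) := h1 n hn1 ⟨haI, ha⟩
        have : z ∈ T * I ^ (n - 1) ⊔ Ideal.span {x} * I ^ (n - 1) := by
          rw [← hwa]
          exact Submodule.add_mem_sup hw hax
        rwa [← Ideal.sup_mul, sup_comm T, ← hJ] at this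
      · apply le_inf
        · calc J * I ^ (n - 1) ≤ I * I ^ (n - 1) := Ideal.mul_mono_left hJI
            _ = I ^ n := hpow
        · exact Ideal.mul_le_left

/-- Let `(A, m)` be a Noetherian local ring, `I` an ideal, and `x₁, …, x_s ∈ I` a
superficial sequence for `I`.  Then for all sufficiently large `n`,
`Iⁿ ∩ (x₁, …, x_s) = (x₁, …, x_s) I^{n-1}`. -/
theorem statement16 {A : Type*} [CommRing A] [IsLocalRing A] [IsNoetherianRing A]
    (I : Ideal A) (xs : List A) (hxs : IsSuperficialSeq I xs) :
    ∀ᶠ n in Filter.atTop,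
      I ^ n ⊓ Ideal.span {x | x ∈ xs} = Ideal.span {x | x ∈ xs} * I ^ (n - 1) := by
  obtain ⟨N, h⟩ := seq_main_aux xs.length I xs rfl hxs
  exact Filter.eventually_atTop.mpr ⟨N, h⟩
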